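/- Let x, y, ỹ ∈ E and ε > 0, and set t := (2·‖x − y‖·‖y − ỹ‖ + ‖y − ỹ‖²)/(4ε). Then |exp(−‖x − ỹ‖²/(4ε)) − exp(−‖x − y‖²/(4ε))| ≤ exp(−‖x − y‖²/(4ε))·(exp(t) − 1). In particular, if ‖y − ỹ‖ ≤ c·h·√ε and ‖x − y‖ ≤ c·h, then the Gaussian kernel evaluated at the perturbed point ỹ equals the kernel at y up to a multiplicative factor 1 + O(h²·ε^{−1/2}). (This is the Gaussian kernel perturbation estimate K^h_{ij} = K_{ij}·(1 + O(h²ε^{−1/2})) established in the proof of Lemma C.3 of the paper.) -/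

import Mathlib

/-! The kernel ratio is `exp s` with `s = (‖x - y‖² - ‖x - ỹ‖²)/(4ε)`, and `|exp s - 1| ≤ exp |s| - 1`.
Writing `x - ỹ = (x - y) + (y - ỹ)`, the triangle inequality bounds `|s|` by
`(2‖x - y‖‖y - ỹ‖ + ‖y - ỹ‖²)/(4ε)`. -/

open Real

lemma Real.abs_exp_sub_one_le_exp_abs_sub_one (s : ℝ) : |exp s - 1| ≤ exp |s| - 1 := by
  rw [abs_le]
  constructor
  · linarith [add_one_le_exp s, neg_le_abs s, add_one_le_exp |s|]
  · linarith [exp_le_exp.2 (le_abs_self s)]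

lemma Real.abs_exp_sub_exp_le {u v t : ℝ} (h : |u - v| ≤ t) :
    |exp u - exp v| ≤ exp v * (exp t - 1) := by
  have hfactor : exp u - exp v = exp v * (exp (u - v) - 1) := by
    rw [mul_sub, ← exp_add, add_sub_cancel, mul_one]
  rw [hfactor, abs_mul, abs_of_pos (exp_pos v)]
  gcongr
  exact (abs_exp_sub_one_le_exp_abs_sub_one _).trans (by gcongr)

lemma abs_norm_add_sq_sub_norm_sq_le {E : Type*} [SeminormedAddCommGroup E] (u v : E) :
    |‖u + v‖ ^ 2 - ‖u‖ ^ 2| ≤ 2 * ‖u‖ * ‖v‖ + ‖v‖ ^ 2 := by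
  have hdiff : |‖u + v‖ - ‖u‖| ≤ ‖v‖ := by
    simpa using abs_norm_sub_norm_le (u + v) u
  calc |‖u + v‖ ^ 2 - ‖u‖ ^ 2| = (‖u + v‖ + ‖u‖) * |‖u + v‖ - ‖u‖| := by
        rw [sq_sub_sq, abs_mul, abs_of_nonneg (by positivity)]
    _ ≤ (2 * ‖u‖ + ‖v‖) * ‖v‖ :=
        mul_le_mul (by linarith [norm_add_le u v]) hdiff (abs_nonneg _) (by positivity)
    _ = 2 * ‖u‖ * ‖v‖ + ‖v‖ ^ 2 := by ring

/-- Gaussian kernel perturbation estimate from the proof of Lemma C.3: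
with `t = (2‖x−y‖‖y−ỹ‖ + ‖y−ỹ‖²)/(4ε)`,
`|exp(−‖x−ỹ‖²/(4ε)) − exp(−‖x−y‖²/(4ε))| ≤ exp(−‖x−y‖²/(4ε))(exp(t) − 1)`. -/
theorem gaussian_kernel_perturbation (n : ℕ) (x y y' : EuclideanSpace ℝ (Fin n))
    (ε : ℝ) (hε : 0 < ε) :
    |Real.exp (-‖x - y'‖ ^ 2 / (4 * ε)) - Real.exp (-‖x - y‖ ^ 2 / (4 * ε))| ≤
      Real.exp (-‖x - y‖ ^ 2 / (4 * ε)) *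
        (Real.exp ((2 * ‖x - y‖ * ‖y - y'‖ + ‖y - y'‖ ^ 2) / (4 * ε)) - 1) := by
  apply abs_exp_sub_exp_le
  have hsq := abs_norm_add_sq_sub_norm_sq_le (x - y) (y - y')
  rw [sub_add_sub_cancel] at hsq
  rw [← sub_div, abs_div, abs_of_pos (by positivity : (0 : ℝ) < 4 * ε), neg_sub_neg, abs_sub_comm]
  gcongr
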